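/- arXiv:1912.00213 — 2 statements merged into one kernel-verified Lean document; each statement's English description precedes it below -/
import Mathlib

section
/- Let P be a partition of the finite set {1,...,k} and let G(P) be the set of simple graphs on vertex set {1,...,k} whose connected components induce exactly the partition P. Then the sum over G in G(P) of (-1)^{|E(G)|} equals the product over the blocks B of P of (-1)^{|B|-1}·(|B|-1)!. -/
/-!
For `S` a finite set of vertices let `a S` be the signed count `∑ (-1)^|E(G)|` over all graphs
with edges inside `S`, and `c S` the same count restricted to those graphs that also connect `S`.
A graph inducing `P` is the edge-disjoint union of its restrictions to the blocks, each connected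
on its block, so the sum in question is `∏_B c B`.

Since `a S` is the alternating sum over all subsets of the edges of the complete graph on `S`,
`a S = 1` if `|S| ≤ 1` and `a S = 0` otherwise. Splitting a graph with edges inside `S` along the
component `T` of a fixed vertex `x ∈ S` gives `a S = ∑_{x ∈ T ⊆ S} c T · a (S \ T)`, where only
`T = S` and `T = S \ {y}` survive. Hence `c S = -∑_{y ≠ x} c (S \ {y})` for `|S| ≥ 2`, and
induction on `|S|` gives `c S = (-1)^(|S|-1) (|S|-1)!`.
-/

open Finset

/-- A simple graph `G` on `Fin k` induces the set partition `P` via its connected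
components: two vertices lie in the same block of `P` iff they are joined by a path. -/
def inducesPartition {k : ℕ} (G : SimpleGraph (Fin k))
    (P : Finpartition (Finset.univ : Finset (Fin k))) : Prop :=
  ∀ i j : Fin k, G.Reachable i j ↔ ∃ B ∈ P.parts, i ∈ B ∧ j ∈ B

open Function
open scoped Classical

namespace Finset

variable {α M : Type*} [DecidableEq α] [AddCommMonoid M]

lemma sum_powerset_filter_mem {s : Finset α} {a : α} (ha : a ∈ s)
    (f : Finset α → Finset α → M) :
    ∑ t ∈ s.powerset with a ∈ t, f t (s \ t) = ∑ u ∈ (s.erase a).powerset, f (s \ u) u := by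
  have hsub {t : Finset α} (ht : t ∈ s.powerset.filter (a ∈ ·)) : t ⊆ s :=
    mem_powerset.mp (mem_filter.mp ht).1
  refine sum_nbij' (s \ ·) (s \ ·) (fun t ht => ?_) (fun u hu => ?_)
    (fun t ht => sdiff_sdiff_eq_self (hsub ht))
    (fun u hu => sdiff_sdiff_eq_self ((mem_powerset.mp hu).trans (erase_subset a s)))
    (fun t ht => by rw [sdiff_sdiff_eq_self (hsub ht)])
  · exact mem_powerset.mpr (subset_erase.mpr
      ⟨sdiff_subset, fun h => (mem_sdiff.mp h).2 (mem_filter.mp ht).2⟩)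
  · exact mem_filter.mpr ⟨mem_powerset.mpr sdiff_subset,
      mem_sdiff.mpr ⟨ha, (subset_erase.mp (mem_powerset.mp hu)).2⟩⟩

lemma sum_powerset_filter_card_le_one (s : Finset α) (f : Finset α → M) :
    ∑ t ∈ s.powerset with #t ≤ 1, f t = f ∅ + ∑ a ∈ s, f {a} := by
  have : s.powerset.filter (#· ≤ 1) = insert ∅ (s.map ⟨singleton, singleton_injective⟩) := by
    ext t
    simp only [mem_filter, mem_powerset, Nat.le_one_iff_eq_zero_or_eq_one, card_eq_zero,
      card_eq_one, mem_insert, mem_map, Function.Embedding.coeFn_mk]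
    constructor
    · rintro ⟨hts, rfl | ⟨a, rfl⟩⟩
      exacts [.inl rfl, .inr ⟨a, singleton_subset_iff.mp hts, rfl⟩]
    · rintro (rfl | ⟨a, ha, rfl⟩)
      exacts [⟨empty_subset _, .inl rfl⟩, ⟨singleton_subset_iff.mpr ha, .inr ⟨a, rfl⟩⟩]
  rw [this, sum_insert (by simp), sum_map]
  rfl

end Finset

namespace SimpleGraph

variable {V : Type*}

def restrict (G : SimpleGraph V) (S : Finset V) : SimpleGraph V where
  Adj i j := G.Adj i j ∧ i ∈ S ∧ j ∈ S
  symm := ⟨fun _ _ h => ⟨h.1.symm, h.2.2, h.2.1⟩⟩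
  loopless := ⟨fun i h => G.loopless.irrefl i h.1⟩

@[simp] lemma restrict_adj {G : SimpleGraph V} {S : Finset V} {i j : V} :
    (G.restrict S).Adj i j ↔ G.Adj i j ∧ i ∈ S ∧ j ∈ S := Iff.rfl

lemma restrict_mono (G : SimpleGraph V) {S T : Finset V} (h : S ⊆ T) :
    G.restrict S ≤ G.restrict T :=
  fun _ _ hij => ⟨hij.1, h hij.2.1, h hij.2.2⟩

lemma restrict_le_restrict_top (G : SimpleGraph V) (S : Finset V) :
    G.restrict S ≤ (⊤ : SimpleGraph V).restrict S :=
  fun _ _ h => ⟨h.1.ne, h.2⟩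

lemma restrict_top_eq_bot_iff {S : Finset V} :
    (⊤ : SimpleGraph V).restrict S = ⊥ ↔ #S ≤ 1 := by
  simp only [SimpleGraph.ext_iff, funext_iff, restrict_adj, top_adj, bot_adj, eq_iff_iff,
    iff_false, not_and, card_le_one]
  exact ⟨fun h a ha b hb => by_contra fun hab => h a b hab ha hb,
    fun h a b hab ha hb => hab (h a ha b hb)⟩

lemma disjoint_of_le_restrict_top {G H : SimpleGraph V} {S T : Finset V}
    (hG : G ≤ (⊤ : SimpleGraph V).restrict S) (hH : H ≤ (⊤ : SimpleGraph V).restrict T)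
    (hST : Disjoint S T) : Disjoint G H :=
  disjoint_left.mpr fun _ _ hGa hHa => Finset.disjoint_left.mp hST (hG hGa).2.1 (hH hHa).2.1

lemma restrict_sup_eq_left {G H : SimpleGraph V} {S T : Finset V}
    (hG : G ≤ (⊤ : SimpleGraph V).restrict S) (hH : H ≤ (⊤ : SimpleGraph V).restrict T)
    (hST : Disjoint S T) : (G ⊔ H).restrict S = G := by
  ext i j
  refine ⟨fun ⟨h, hi, _⟩ => h.resolve_right fun hH' => ?_, fun h => ⟨Or.inl h, (hG h).2⟩⟩
  exact Finset.disjoint_left.mp hST hi (hH hH').2.1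

lemma restrict_sup_eq_right {G H : SimpleGraph V} {S T : Finset V}
    (hG : G ≤ (⊤ : SimpleGraph V).restrict S) (hH : H ≤ (⊤ : SimpleGraph V).restrict T)
    (hST : Disjoint S T) : (G ⊔ H).restrict T = H := by
  rw [sup_comm]
  exact restrict_sup_eq_left hH hG hST.symm

lemma Reachable.mem_of_adj_closed {G : SimpleGraph V} {T : Finset V}
    (hT : ∀ ⦃a b⦄, G.Adj a b → a ∈ T → b ∈ T) {i j : V} (h : G.Reachable i j) (hi : i ∈ T) :
    j ∈ T := by
  rw [reachable_iff_reflTransGen] at h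
  induction h with
  | refl => exact hi
  | tail _ hab ih => exact hT hab ih

lemma Reachable.restrict_of_adj_closed {G : SimpleGraph V} {T : Finset V}
    (hT : ∀ ⦃a b⦄, G.Adj a b → a ∈ T → b ∈ T) {i j : V} (h : G.Reachable i j) (hi : i ∈ T) :
    (G.restrict T).Reachable i j := by
  rw [reachable_iff_reflTransGen] at h
  induction h with
  | refl => rfl
  | @tail b c hib hbc ih =>
    have hb : b ∈ T := ((reachable_iff_reflTransGen i b).mpr hib).mem_of_adj_closed hT hi
    exact ih.trans (Adj.reachable ⟨hbc, hb, hT hbc hb⟩)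

variable [DecidableEq V]

lemma restrict_sup_restrict_sdiff {G : SimpleGraph V} {S T : Finset V}
    (hG : G ≤ (⊤ : SimpleGraph V).restrict S) (hT : ∀ ⦃a b⦄, G.Adj a b → a ∈ T → b ∈ T) :
    G.restrict T ⊔ G.restrict (S \ T) = G := by
  ext i j
  refine ⟨fun h => h.elim And.left And.left, fun h => ?_⟩
  by_cases hi : i ∈ T
  · exact Or.inl ⟨h, hi, hT h hi⟩
  · have hj : j ∉ T := fun hj => hi (hT h.symm hj)
    exact Or.inr ⟨h, mem_sdiff.mpr ⟨(hG h).2.1, hi⟩, mem_sdiff.mpr ⟨(hG h).2.2, hj⟩⟩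

variable [Fintype V]

lemma card_edgeFinset_eq_add_of_sup_eq {G H K : SimpleGraph V} (h : Disjoint G H)
    (hK : G ⊔ H = K) : #K.edgeFinset = #G.edgeFinset + #H.edgeFinset := by
  subst hK
  rw [← card_union_of_disjoint (disjoint_edgeFinset.mpr h)]
  congr 1
  ext e
  simp

lemma card_edgeFinset_eq_sum_of_iSup_eq {ι : Type*} [Fintype ι] {f : ι → SimpleGraph V}
    {G : SimpleGraph V} (hf : Pairwise (Disjoint on f)) (hG : ⨆ i, f i = G) :
    #G.edgeFinset = ∑ i, #(f i).edgeFinset := by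
  subst hG
  rw [← card_biUnion fun i _ j _ hij => disjoint_edgeFinset.mpr (hf hij)]
  congr 1
  ext e
  simp [edgeSet_iSup]

lemma sum_le_eq_sum_powerset_edgeFinset {M : Type*} [AddCommMonoid M] (H : SimpleGraph V)
    (f : Finset (Sym2 V) → M) :
    ∑ G ∈ univ.filter (· ≤ H), f G.edgeFinset = ∑ E ∈ H.edgeFinset.powerset, f E := by
  have hsub {E : Finset (Sym2 V)} (hE : E ∈ H.edgeFinset.powerset) :
      (E : Set (Sym2 V)) ⊆ H.edgeSet := by
    rw [← coe_edgeFinset, coe_subset]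
    exact mem_powerset.mp hE
  refine sum_nbij' (fun G => G.edgeFinset) (fun E => fromEdgeSet E) (fun G hG => ?_)
    (fun E hE => ?_) (fun G _ => by simp [fromEdgeSet_edgeSet]) (fun E hE => ?_) fun _ _ => rfl
  · simpa [edgeFinset_subset_edgeFinset] using hG
  · simpa using Set.sdiff_subset.trans (hsub hE)
  · apply coe_injective
    rw [coe_edgeFinset, edgeSet_fromEdgeSet, sdiff_eq_left]
    exact Set.subset_compl_iff_disjoint_right.mp ((hsub hE).trans (edgeSet_subset_compl_diagSet H))

lemma sum_le_neg_one_pow_card_edgeFinset (H : SimpleGraph V) :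
    ∑ G ∈ univ.filter (· ≤ H), (-1 : ℤ) ^ #G.edgeFinset = if H = ⊥ then 1 else 0 := by
  rw [sum_le_eq_sum_powerset_edgeFinset H fun E => (-1 : ℤ) ^ #E]
  simp [sum_powerset_neg_one_pow_card]

noncomputable def graphsOn (S : Finset V) : Finset (SimpleGraph V) :=
  univ.filter (· ≤ (⊤ : SimpleGraph V).restrict S)

noncomputable def connectedGraphsOn (S : Finset V) : Finset (SimpleGraph V) :=
  (graphsOn S).filter fun G => ∀ i ∈ S, ∀ j ∈ S, G.Reachable i j

noncomputable def signedSum (𝒢 : Finset (SimpleGraph V)) : ℤ :=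
  ∑ G ∈ 𝒢, (-1) ^ #G.edgeFinset

lemma mem_graphsOn {G : SimpleGraph V} {S : Finset V} :
    G ∈ graphsOn S ↔ G ≤ (⊤ : SimpleGraph V).restrict S := by
  simp [graphsOn]

lemma mem_connectedGraphsOn {G : SimpleGraph V} {S : Finset V} :
    G ∈ connectedGraphsOn S ↔
      G ≤ (⊤ : SimpleGraph V).restrict S ∧ ∀ i ∈ S, ∀ j ∈ S, G.Reachable i j := by
  simp [connectedGraphsOn, mem_graphsOn]

lemma restrict_mem_connectedGraphsOn {G : SimpleGraph V} {T : Finset V}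
    (hT : ∀ ⦃a b⦄, G.Adj a b → a ∈ T → b ∈ T) (hG : ∀ i ∈ T, ∀ j ∈ T, G.Reachable i j) :
    G.restrict T ∈ connectedGraphsOn T :=
  mem_connectedGraphsOn.mpr ⟨restrict_le_restrict_top G T,
    fun i hi j hj => (hG i hi j hj).restrict_of_adj_closed hT hi⟩

lemma signedSum_graphsOn (S : Finset V) :
    signedSum (graphsOn S) = if #S ≤ 1 then 1 else 0 := by
  simp only [signedSum, graphsOn, sum_le_neg_one_pow_card_edgeFinset, restrict_top_eq_bot_iff]

noncomputable def componentFinset (G : SimpleGraph V) (x : V) : Finset V :=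
  {v | G.Reachable x v}

lemma mem_componentFinset {G : SimpleGraph V} {x v : V} :
    v ∈ G.componentFinset x ↔ G.Reachable x v := by
  simp [componentFinset]

lemma adj_closed_componentFinset (G : SimpleGraph V) (x : V) ⦃a b : V⦄ (hab : G.Adj a b)
    (ha : a ∈ G.componentFinset x) : b ∈ G.componentFinset x :=
  mem_componentFinset.mpr ((mem_componentFinset.mp ha).trans hab.reachable)

lemma restrict_componentFinset_mem_connectedGraphsOn (G : SimpleGraph V) (x : V) :
    G.restrict (G.componentFinset x) ∈ connectedGraphsOn (G.componentFinset x) :=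
  restrict_mem_connectedGraphsOn (adj_closed_componentFinset G x) fun _ hi _ hj =>
    (mem_componentFinset.mp hi).symm.trans (mem_componentFinset.mp hj)

lemma componentFinset_sup {G H : SimpleGraph V} {S T : Finset V} {x : V}
    (hG : G ∈ connectedGraphsOn S) (hH : H ≤ (⊤ : SimpleGraph V).restrict T)
    (hST : Disjoint S T) (hx : x ∈ S) : (G ⊔ H).componentFinset x = S := by
  rw [mem_connectedGraphsOn] at hG
  ext v
  rw [mem_componentFinset]
  refine ⟨fun h => h.mem_of_adj_closed (fun a b hab ha => ?_) hx,
    fun hv => (hG.2 x hx v hv).mono le_sup_left⟩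
  refine hab.elim (fun hab => (hG.1 hab).2.2) (fun hab => ?_)
  exact absurd (hH hab).2.1 (Finset.disjoint_left.mp hST ha)

lemma sum_fiber_componentFinset {S T : Finset V} {x : V} (hTS : T ⊆ S) (hxT : x ∈ T) :
    ∑ G ∈ graphsOn S with G.componentFinset x = T, (-1 : ℤ) ^ #G.edgeFinset =
      signedSum (connectedGraphsOn T) * signedSum (graphsOn (S \ T)) := by
  have hdisj : Disjoint T (S \ T) := disjoint_sdiff
  rw [signedSum, signedSum, sum_mul_sum, ← sum_product']
  refine sum_nbij' (fun G => (G.restrict T, G.restrict (S \ T))) (fun p => p.1 ⊔ p.2)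
    (fun G hG => ?_) (fun p hp => ?_) (fun G hG => ?_) (fun p hp => ?_) (fun G hG => ?_)
  · obtain ⟨-, rfl⟩ := mem_filter.mp hG
    exact mem_product.mpr ⟨restrict_componentFinset_mem_connectedGraphsOn G x,
      mem_graphsOn.mpr (restrict_le_restrict_top _ _)⟩
  · obtain ⟨hG, hH⟩ := mem_product.mp hp
    rw [mem_graphsOn] at hH
    refine mem_filter.mpr ⟨mem_graphsOn.mpr (sup_le ?_ ?_), componentFinset_sup hG hH hdisj hxT⟩
    · exact (mem_connectedGraphsOn.mp hG).1.trans (restrict_mono _ hTS)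
    · exact hH.trans (restrict_mono _ sdiff_subset)
  · obtain ⟨hGS, rfl⟩ := mem_filter.mp hG
    exact restrict_sup_restrict_sdiff (mem_graphsOn.mp hGS) (adj_closed_componentFinset G x)
  · obtain ⟨hG, hH⟩ := mem_product.mp hp
    have hG' := (mem_connectedGraphsOn.mp hG).1
    rw [mem_graphsOn] at hH
    exact Prod.ext (restrict_sup_eq_left hG' hH hdisj) (restrict_sup_eq_right hG' hH hdisj)
  · obtain ⟨hGS, rfl⟩ := mem_filter.mp hG
    rw [← pow_add, card_edgeFinset_eq_add_of_sup_eq (disjoint_of_le_restrict_top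
      (restrict_le_restrict_top G _) (restrict_le_restrict_top G _) hdisj)
      (restrict_sup_restrict_sdiff (mem_graphsOn.mp hGS) (adj_closed_componentFinset G x))]

lemma signedSum_graphsOn_eq_sum_component {S : Finset V} {x : V} (hx : x ∈ S) :
    signedSum (graphsOn S) = ∑ T ∈ S.powerset with x ∈ T,
      signedSum (connectedGraphsOn T) * signedSum (graphsOn (S \ T)) := by
  rw [signedSum, ← sum_fiberwise_of_maps_to (g := fun G => G.componentFinset x)
    (t := S.powerset.filter (x ∈ ·))]
  · refine sum_congr rfl fun T hT => ?_
    obtain ⟨hTS, hxT⟩ := mem_filter.mp hT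
    exact sum_fiber_componentFinset (mem_powerset.mp hTS) hxT
  · intro G hG
    refine mem_filter.mpr ⟨mem_powerset.mpr fun v hv => ?_, mem_componentFinset.mpr .rfl⟩
    exact (mem_componentFinset.mp hv).mem_of_adj_closed
      (fun _ _ hab _ => (mem_graphsOn.mp hG hab).2.2) hx

lemma signedSum_connectedGraphsOn_add_sum_erase {S : Finset V} {x : V} (hx : x ∈ S) :
    signedSum (connectedGraphsOn S) + ∑ y ∈ S.erase x, signedSum (connectedGraphsOn (S.erase y))
      = if #S ≤ 1 then 1 else 0 := by
  rw [← signedSum_graphsOn, signedSum_graphsOn_eq_sum_component hx,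
    sum_powerset_filter_mem hx fun T U => signedSum (connectedGraphsOn T) * signedSum (graphsOn U)]
  simp only [signedSum_graphsOn, mul_ite, mul_one, mul_zero, ← sum_filter]
  rw [sum_powerset_filter_card_le_one, sdiff_empty]
  simp only [sdiff_singleton_eq_erase]

lemma signedSum_connectedGraphsOn {S : Finset V} {n : ℕ} (hS : #S = n + 1) :
    signedSum (connectedGraphsOn S) = (-1) ^ n * n.factorial := by
  induction n generalizing S with
  | zero =>
    obtain ⟨x, rfl⟩ := card_eq_one.mp hS
    simpa using signedSum_connectedGraphsOn_add_sum_erase (mem_singleton_self x)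
  | succ n ih =>
    obtain ⟨x, hx⟩ : S.Nonempty := card_pos.mp (by omega)
    have hcard {y : V} (hy : y ∈ S.erase x) : #(S.erase y) = n + 1 := by
      rw [card_erase_of_mem (mem_of_mem_erase hy), hS, Nat.add_sub_cancel]
    have hrec := signedSum_connectedGraphsOn_add_sum_erase hx
    rw [sum_congr rfl fun y hy => ih (hcard hy), sum_const, card_erase_of_mem hx, hS,
      if_neg (by omega), Nat.add_sub_cancel, nsmul_eq_mul] at hrec
    push_cast [Nat.factorial_succ, pow_succ] at hrec ⊢
    linear_combination hrec

section Partition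

variable {P : Finpartition (univ : Finset V)}

lemma adj_closed_of_mem_parts {G : SimpleGraph V}
    (hG : ∀ ⦃a b⦄, G.Adj a b → ∃ B ∈ P.parts, a ∈ B ∧ b ∈ B) {B : Finset V}
    (hB : B ∈ P.parts) ⦃a b : V⦄ (hab : G.Adj a b) (ha : a ∈ B) : b ∈ B := by
  obtain ⟨B', hB', haB', hbB'⟩ := hG hab
  rwa [P.eq_of_mem_parts hB hB' ha haB']

section Restrict

variable {G : SimpleGraph V} (hG : ∀ i j, G.Reachable i j ↔ ∃ B ∈ P.parts, i ∈ B ∧ j ∈ B)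
include hG

lemma restrict_mem_connectedGraphsOn_of_mem_parts {B : Finset V} (hB : B ∈ P.parts) :
    G.restrict B ∈ connectedGraphsOn B :=
  restrict_mem_connectedGraphsOn
    (adj_closed_of_mem_parts (fun a b hab => (hG a b).mp hab.reachable) hB)
    fun i hi j hj => (hG i j).mpr ⟨B, hB, hi, hj⟩

lemma iSup_restrict_parts : ⨆ B : P.parts, G.restrict B = G := by
  ext i j
  simp only [iSup_adj, restrict_adj]
  refine ⟨fun ⟨_, h, _⟩ => h, fun h => ?_⟩
  obtain ⟨B, hB, hi, hj⟩ := (hG i j).mp h.reachable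
  exact ⟨⟨B, hB⟩, h, hi, hj⟩

end Restrict

section Glue

variable {p : P.parts → SimpleGraph V}

lemma restrict_iSup_parts (hp : ∀ B : P.parts, p B ≤ (⊤ : SimpleGraph V).restrict B)
    (B : P.parts) : (⨆ B', p B').restrict B = p B := by
  ext i j
  simp only [restrict_adj, iSup_adj]
  refine ⟨fun ⟨⟨B', h⟩, hi, _⟩ => ?_, fun h => ⟨⟨B, h⟩, (hp B h).2⟩⟩
  rwa [Subtype.ext (P.eq_of_mem_parts B.2 B'.2 hi (hp B' h).2.1)]

lemma reachable_iSup_iff (hp : ∀ B : P.parts, p B ∈ connectedGraphsOn (B : Finset V))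
    (i j : V) : (⨆ B, p B).Reachable i j ↔ ∃ B ∈ P.parts, i ∈ B ∧ j ∈ B := by
  refine ⟨fun h => ?_, fun ⟨B, hB, hi, hj⟩ => ?_⟩
  · obtain ⟨B, hB, hi⟩ := P.exists_mem (mem_univ i)
    refine ⟨B, hB, hi, h.mem_of_adj_closed (adj_closed_of_mem_parts (fun a b hab => ?_) hB) hi⟩
    obtain ⟨B', hab⟩ := iSup_adj.mp hab
    exact ⟨B', B'.2, ((mem_connectedGraphsOn.mp (hp B')).1 hab).2⟩
  · exact ((mem_connectedGraphsOn.mp (hp ⟨B, hB⟩)).2 i hi j hj).mono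
      (le_iSup p (⟨B, hB⟩ : P.parts))

end Glue

end Partition

-- Stated for any finset with these members rather than for a `filter`, so that it applies
-- whatever `DecidablePred` instance the filter was built with.
lemma signedSum_eq_prod_parts (P : Finpartition (univ : Finset V))
    {𝒢 : Finset (SimpleGraph V)}
    (h𝒢 : ∀ G, G ∈ 𝒢 ↔ ∀ i j, G.Reachable i j ↔ ∃ B ∈ P.parts, i ∈ B ∧ j ∈ B) :
    signedSum 𝒢 = ∏ B ∈ P.parts, signedSum (connectedGraphsOn B) := by
  rw [← prod_coe_sort]
  simp only [signedSum]
  rw [prod_univ_sum]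
  refine sum_nbij' (fun G B => G.restrict B) (fun p => ⨆ B, p B) (fun G hG => ?_)
    (fun p hp => ?_) (fun G hG => iSup_restrict_parts ((h𝒢 G).mp hG)) (fun p hp => ?_)
    (fun G hG => ?_)
  · exact Fintype.mem_piFinset.mpr fun B =>
      restrict_mem_connectedGraphsOn_of_mem_parts ((h𝒢 G).mp hG) B.2
  · exact (h𝒢 _).mpr (reachable_iSup_iff (Fintype.mem_piFinset.mp hp))
  · funext B
    exact restrict_iSup_parts
      (fun B => (mem_connectedGraphsOn.mp (Fintype.mem_piFinset.mp hp B)).1) B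
  · have hdisj : Pairwise (Disjoint on fun B : P.parts => G.restrict B) :=
      fun B B' hne => disjoint_of_le_restrict_top (restrict_le_restrict_top G _)
        (restrict_le_restrict_top G _) (P.disjoint B.2 B'.2 (Subtype.coe_ne_coe.mpr hne))
    rw [prod_pow_eq_pow_sum,
      card_edgeFinset_eq_sum_of_iSup_eq hdisj (iSup_restrict_parts ((h𝒢 G).mp hG))]

end SimpleGraph

open scoped Classical in
theorem signed_sum_graphs_inducing_partition (k : ℕ)
    (P : Finpartition (Finset.univ : Finset (Fin k))) :
    ∑ G ∈ (Finset.univ : Finset (SimpleGraph (Fin k))).filter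
        (fun G => inducesPartition G P),
      (-1 : ℤ) ^ G.edgeFinset.card
      = ∏ B ∈ P.parts, (-1 : ℤ) ^ (B.card - 1) * (Nat.factorial (B.card - 1)) := by
  refine (SimpleGraph.signedSum_eq_prod_parts P fun G => ?_).trans
    (prod_congr rfl fun B hB => ?_)
  · exact mem_filter.trans (and_iff_right (mem_univ G))
  · obtain ⟨n, hn⟩ := Nat.exists_eq_add_one.mpr (P.nonempty_of_mem_parts hB).card_pos
    rw [SimpleGraph.signedSum_connectedGraphsOn hn, hn, Nat.add_sub_cancel]
end

section
/- Let R be a commutative Q-algebra and let f : ℕ → R[[t]] be a function such that t^n divides f(n) for all n ≥ 1. Then 1 + ∑_{k≥1} ∑_{P partition of {1,...,k}} (a(P)/k!)·∏_{blocks B of P} f(|B|) = exp(∑_{u≥1} (-1)^{u-1} f(u)/u), where a(P) = ∏_{blocks B of P} (-1)^{|B|-1}(|B|-1)!, and exp is the formal exponential power series. -/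
/-!
Put `h u = (-1)^(u-1) f(u) / u`, so that `|B|! h(|B|)` is the weight `(-1)^(|B|-1) (|B|-1)! f(|B|)`
of a block. Since `t^u ∣ h u`, the coefficient of `t^d` on the right only involves the part of
`exp (∑ u, h u)` of total weight `k ≤ d`, namely `∑_s (1/s!) ∑_{v₁+⋯+vₛ = k} ∏ i, h (vᵢ)`.
This is the exponential formula: `k!` times the inner sum and `s!` times the sum over partitions
of `[k]` into `s` blocks both equal the sum over surjections `[k] → [s]` of
`∏ (fiber size)! h (fiber size)`, because a surjection is a partition with an ordering of its
blocks, and there are `k! / ∏ vᵢ!` maps with fiber sizes `v`.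
-/

open Finset PowerSeries

/-- The sum `∑_{k≥0} F k` of a family of formal power series such that `t^k ∣ F k`:
in each degree `d` only the terms with `k ≤ d` contribute, so the coefficientwise
truncated sum below is the genuine infinite sum. -/
noncomputable def seriesSum {R : Type*} [CommRing R] (F : ℕ → PowerSeries R) :
    PowerSeries R :=
  PowerSeries.mk fun d => ∑ k ∈ Finset.range (d + 1), PowerSeries.coeff d (F k)

/-- The formal exponential `exp g = ∑_{s≥0} g^s / s!` of a power series `g` with zero
constant term over a commutative `ℚ`-algebra: in each degree `d` only `s ≤ d`
contribute. -/
noncomputable def formalExp {R : Type*} [CommRing R] [Algebra ℚ R] (g : PowerSeries R) :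
    PowerSeries R :=
  PowerSeries.mk fun d => ∑ s ∈ Finset.range (d + 1),
    PowerSeries.coeff d (algebraMap ℚ (PowerSeries R) (1 / (Nat.factorial s : ℚ)) * g ^ s)

/-- The coefficient `a(P) = ∏_{B block of P} (-1)^{|B|-1} (|B|-1)!` (as a rational). -/
def aCoef {k : ℕ} (P : Finpartition (Finset.univ : Finset (Fin k))) : ℚ :=
  ∏ B ∈ P.parts, (-1 : ℚ) ^ (B.card - 1) * (Nat.factorial (B.card - 1) : ℚ)

open scoped Nat

def Equiv.equivSigmaEquiv {α ι : Type*} {β : ι → Type*} :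
    (α ≃ Σ i, β i) ≃ Σ g : α → ι, ∀ i, {a // g a = i} ≃ β i where
  toFun σ := ⟨fun a => (σ a).1, fun i =>
    (σ.subtypeEquiv fun _ => Iff.rfl).trans (Equiv.sigmaSubtype i)⟩
  invFun x := (Equiv.sigmaFiberEquiv x.1).symm.trans (Equiv.sigmaCongrRight x.2)
  left_inv _ := rfl
  right_inv := by
    rintro ⟨g, e⟩
    refine Sigma.ext rfl (heq_of_eq (funext fun i => Equiv.ext ?_))
    rintro ⟨a, rfl⟩
    rfl

theorem Finset.fiber_injective {α ι : Type*} [Fintype α] [DecidableEq ι] {g : α → ι}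
    (hg : Function.Surjective g) : Function.Injective fun i => ({a | g a = i} : Finset α) := by
  intro i j hij
  obtain ⟨a, rfl⟩ := hg i
  simpa using (Finset.ext_iff.1 hij a).1 (by simp)

namespace Finpartition

theorem parts_eq_image_part {α : Type*} [DecidableEq α] {s : Finset α} (P : Finpartition s) :
    P.parts = s.image P.part := by
  ext t
  refine ⟨fun ht => ?_, fun ht => ?_⟩
  · obtain ⟨a, ha⟩ := P.nonempty_of_mem_parts ht
    exact mem_image.2 ⟨a, P.le ht ha, P.part_eq_of_mem ht ha⟩
  · obtain ⟨a, ha, rfl⟩ := mem_image.1 ht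
    exact P.part_mem.2 ha

theorem ext_part {α : Type*} [DecidableEq α] {s : Finset α} {P Q : Finpartition s}
    (h : ∀ a ∈ s, P.part a = Q.part a) : P = Q :=
  Finpartition.ext (by rw [parts_eq_image_part, parts_eq_image_part, image_congr h])

variable {α ι : Type*} [Fintype α] [DecidableEq α]

open Classical in
noncomputable def ker (g : α → ι) : Finpartition (univ : Finset α) := ofSetoid (Setoid.ker g)

variable [DecidableEq ι]

theorem part_ker (g : α → ι) (a : α) : (ker g).part a = ({b | g b = g a} : Finset α) := by
  ext b
  simp [ker, mem_part_ofSetoid_iff_rel, eq_comm]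

variable [Fintype ι]

theorem ker_parts {g : α → ι} (hg : Function.Surjective g) :
    (ker g).parts = univ.image fun i => ({a | g a = i} : Finset α) := by
  rw [parts_eq_image_part, ← image_univ_of_surjective hg, image_image]
  exact image_congr fun a _ => part_ker g a

theorem card_ker_parts {g : α → ι} (hg : Function.Surjective g) :
    #(ker g).parts = Fintype.card ι := by
  rw [ker_parts hg, card_image_of_injective _ (fiber_injective hg), card_univ]

theorem prod_ker_parts {M : Type*} [CommMonoid M] (W : ℕ → M) {g : α → ι}
    (hg : Function.Surjective g) :
    ∏ B ∈ (ker g).parts, W #B = ∏ i, W #{a | g a = i} := by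
  rw [ker_parts hg, prod_image (fiber_injective hg).injOn]

theorem card_surjective_ker_eq (P : Finpartition (univ : Finset α))
    (hP : #P.parts = Fintype.card ι) :
    #{g : α → ι | Function.Surjective g ∧ ker g = P} = (Fintype.card ι)! := by
  set π : α → P.parts := fun a => ⟨P.part a, P.part_mem.2 (mem_univ a)⟩
  have hπ : Function.Surjective π := by
    rintro ⟨t, ht⟩
    obtain ⟨a, ha⟩ := P.nonempty_of_mem_parts ht
    exact ⟨a, Subtype.ext (P.part_eq_of_mem ht ha)⟩
  have hrange : ({g | Function.Surjective g ∧ ker g = P} : Finset (α → ι)) =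
      univ.image fun ℓ : P.parts ≃ ι => ℓ ∘ π := by
    ext g
    simp only [mem_filter, mem_univ, true_and, mem_image]
    constructor
    · rintro ⟨hg, rfl⟩
      let m : ι → (ker g).parts := fun i =>
        ⟨({a | g a = i} : Finset α), by rw [ker_parts hg]; exact mem_image_of_mem _ (mem_univ i)⟩
      have hm : Function.Bijective m := by
        rw [Fintype.bijective_iff_injective_and_card]
        exact ⟨fun i j hij => fiber_injective hg (congrArg Subtype.val hij),
          by simp [card_ker_parts hg]⟩
      refine ⟨(Equiv.ofBijective m hm).symm, funext fun a => ?_⟩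
      rw [Function.comp_apply, Equiv.symm_apply_eq]
      exact Subtype.ext (part_ker g a)
    · rintro ⟨ℓ, rfl⟩
      refine ⟨ℓ.surjective.comp hπ, ext_part fun a _ => ?_⟩
      ext b
      rw [part_ker, mem_filter, Function.comp_apply, Function.comp_apply, ℓ.apply_eq_iff_eq,
        Subtype.mk.injEq, P.mem_part_iff_part_eq_part (mem_univ b) (mem_univ a)]
      simp
  rw [hrange, card_image_of_injective _ fun ℓ ℓ' h => Equiv.coe_fn_injective
      (hπ.injective_comp_right h), card_univ,
    Fintype.card_equiv (Fintype.equivOfCardEq (by simpa using hP)), Fintype.card_coe, hP]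

end Finpartition

section FiberSums

variable {α ι : Type*} [Fintype α] [DecidableEq α] [Fintype ι] [DecidableEq ι]

theorem card_fibers_mul_prod_factorial {v : ι → ℕ} (hv : ∑ i, v i = Fintype.card α) :
    #{g : α → ι | (fun i => #{a | g a = i}) = v} * ∏ i, (v i)! = (Fintype.card α)! := by
  have hcard : Fintype.card (α ≃ Σ i, Fin (v i)) = (Fintype.card α)! :=
    Fintype.card_equiv (Fintype.equivOfCardEq (by simp [hv]))
  have hfibers : ∀ g : α → ι, Fintype.card (∀ i, {a // g a = i} ≃ Fin (v i)) =
      if (fun i => #{a | g a = i}) = v then ∏ i, (v i)! else 0 := by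
    intro g
    rw [Fintype.card_pi]
    split_ifs with hg
    · refine prod_congr rfl fun i _ => ?_
      have hi : Fintype.card {a // g a = i} = v i := by simp [Fintype.card_subtype, ← hg]
      rw [Fintype.card_equiv (Fintype.equivOfCardEq (by simp [hi])), hi]
    · obtain ⟨i, hi⟩ := not_forall.1 (mt funext hg)
      refine prod_eq_zero (mem_univ i) (Fintype.card_eq_zero_iff.2 ⟨fun e => hi ?_⟩)
      simpa [Fintype.card_subtype] using Fintype.card_congr e
  rw [← hcard, Fintype.card_congr Equiv.equivSigmaEquiv, Fintype.card_sigma,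
    sum_congr rfl fun g _ => hfibers g, sum_ite, sum_const_zero, add_zero, sum_const, smul_eq_mul]

theorem sum_prod_card_fibers_eq_sum_piAntidiag {A : Type*} [CommSemiring A] (h : ℕ → A) :
    ∑ g : α → ι, ∏ i, ((#{a | g a = i})! * h #{a | g a = i}) =
      (Fintype.card α)! * ∑ v ∈ piAntidiag (univ : Finset ι) (Fintype.card α), ∏ i, h (v i) := by
  have hmaps : ∀ g ∈ (univ : Finset (α → ι)),
      (fun i => #{a | g a = i}) ∈ piAntidiag (univ : Finset ι) (Fintype.card α) := fun g _ => by
    rw [mem_piAntidiag, ← card_univ, card_eq_sum_card_fiberwise fun a _ => mem_univ (g a)]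
    simp
  rw [← sum_fiberwise_of_maps_to hmaps, mul_sum]
  refine sum_congr rfl fun v hv => ?_
  have hterm : ∀ g ∈ ({g | (fun i => #{a | g a = i}) = v} : Finset (α → ι)),
      ∏ i, ((#{a | g a = i})! * h #{a | g a = i}) = ∏ i, ((v i)! * h (v i)) := by
    intro g hg
    obtain ⟨-, rfl⟩ := mem_filter.1 hg
    rfl
  rw [sum_congr rfl hterm, sum_const, prod_mul_distrib, nsmul_eq_mul, ← mul_assoc]
  exact_mod_cast congrArg (fun n : ℕ => (n : A) * ∏ i, h (v i))
    (card_fibers_mul_prod_factorial (mem_piAntidiag.1 hv).1)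

theorem sum_prod_card_fibers_eq_sum_finpartition {A : Type*} [CommSemiring A] (W : ℕ → A)
    (hW : W 0 = 0) :
    ∑ g : α → ι, ∏ i, W #{a | g a = i} = (Fintype.card ι)! *
      ∑ P : Finpartition (univ : Finset α) with #P.parts = Fintype.card ι, ∏ B ∈ P.parts, W #B := by
  have hsurj : ∑ g : α → ι, ∏ i, W #{a | g a = i} =
      ∑ g : α → ι with Function.Surjective g, ∏ i, W #{a | g a = i} := by
    refine (sum_filter_of_ne fun g _ hne => ?_).symm
    by_contra hg
    obtain ⟨i, hi⟩ := not_forall.1 hg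
    refine hne (prod_eq_zero (mem_univ i) ?_)
    rw [card_eq_zero.2 (filter_eq_empty_iff.2 fun a _ ha => hi ⟨a, ha⟩), hW]
  have hmaps : ∀ g ∈ ({g | Function.Surjective g} : Finset (α → ι)),
      Finpartition.ker g ∈ ({P | #P.parts = Fintype.card ι} : Finset (Finpartition univ)) :=
    fun g hg => mem_filter.2 ⟨mem_univ _, Finpartition.card_ker_parts (mem_filter.1 hg).2⟩
  rw [hsurj, ← sum_fiberwise_of_maps_to hmaps, mul_sum]
  refine sum_congr rfl fun P hP => ?_
  rw [filter_filter, ← Finpartition.card_surjective_ker_eq P (mem_filter.1 hP).2, ← nsmul_eq_mul,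
    ← sum_const]
  refine sum_congr rfl fun g hg => ?_
  obtain ⟨hg_surj, rfl⟩ := (mem_filter.1 hg).2
  exact (Finpartition.prod_ker_parts W hg_surj).symm

end FiberSums

section ExpWeightPart

variable {A : Type*} [CommSemiring A]

theorem sum_piAntidiag_prod_eq_zero {h : ℕ → A} (h0 : h 0 = 0) {s k : ℕ} (hks : k < s) :
    ∑ v ∈ piAntidiag (univ : Finset (Fin s)) k, ∏ i, h (v i) = 0 := by
  refine sum_eq_zero fun v hv => ?_
  obtain ⟨i, hi⟩ : ∃ i, v i = 0 := by
    by_contra! hv0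
    have : s ≤ ∑ i, v i := by
      simpa using card_nsmul_le_sum univ v 1 fun i _ => Nat.one_le_iff_ne_zero.2 (hv0 i)
    rw [(mem_piAntidiag.1 hv).1] at this
    omega
  exact prod_eq_zero (mem_univ i) (by rw [hi, h0])

variable [Algebra ℚ A]

theorem algebraMap_one_div_factorial_mul_factorial (n : ℕ) :
    algebraMap ℚ A (1 / (n ! : ℚ)) * (n ! : A) = 1 := by
  rw [← map_natCast (algebraMap ℚ A), ← map_mul, one_div_mul_cancel (by positivity), map_one]

/-- The part of `exp (∑ u, h u)` of total weight `k`, each `h u` having weight `u`. -/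
noncomputable def expWeightPart (h : ℕ → A) (k : ℕ) : A :=
  ∑ s ∈ range (k + 1), algebraMap ℚ A (1 / (s ! : ℚ)) *
    ∑ v ∈ piAntidiag (univ : Finset (Fin s)) k, ∏ i, h (v i)

theorem expWeightPart_zero (h : ℕ → A) : expWeightPart h 0 = 1 := by
  simp [expWeightPart]

theorem expWeightPart_eq_sum_range {h : ℕ → A} (h0 : h 0 = 0) {k N : ℕ} (hkN : k ≤ N) :
    expWeightPart h k = ∑ s ∈ range (N + 1), algebraMap ℚ A (1 / (s ! : ℚ)) *
      ∑ v ∈ piAntidiag (univ : Finset (Fin s)) k, ∏ i, h (v i) :=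
  sum_subset (range_subset_range.2 (by omega)) fun s _ hs => by
    rw [sum_piAntidiag_prod_eq_zero h0 (by simpa using hs), mul_zero]

theorem expWeightPart_eq_sum_finpartition {h : ℕ → A} (h0 : h 0 = 0) (k : ℕ) :
    expWeightPart h k = algebraMap ℚ A (1 / (k ! : ℚ)) *
      ∑ P : Finpartition (univ : Finset (Fin k)), ∏ B ∈ P.parts, ((#B)! * h #B) := by
  have hmaps : ∀ P ∈ (univ : Finset (Finpartition (univ : Finset (Fin k)))),
      #P.parts ∈ range (k + 1) := fun P _ => by
    simpa [Nat.lt_succ_iff] using P.card_parts_le_card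
  rw [expWeightPart, ← sum_fiberwise_of_maps_to hmaps, mul_sum]
  refine sum_congr rfl fun s _ => ?_
  have key := (sum_prod_card_fibers_eq_sum_piAntidiag (α := Fin k) (ι := Fin s) h).symm.trans
    (sum_prod_card_fibers_eq_sum_finpartition (fun u => u ! * h u) (by simp [h0]))
  simp only [Fintype.card_fin] at key
  calc algebraMap ℚ A (1 / (s ! : ℚ)) * ∑ v ∈ piAntidiag univ k, ∏ i, h (v i)
      = algebraMap ℚ A (1 / (s ! : ℚ)) * ((algebraMap ℚ A (1 / (k ! : ℚ)) * k !) *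
          ∑ v ∈ piAntidiag univ k, ∏ i, h (v i)) := by
        rw [algebraMap_one_div_factorial_mul_factorial, one_mul]
    _ = algebraMap ℚ A (1 / (k ! : ℚ)) * (algebraMap ℚ A (1 / (s ! : ℚ)) *
          (k ! * ∑ v ∈ piAntidiag univ k, ∏ i, h (v i))) := by ring
    _ = algebraMap ℚ A (1 / (k ! : ℚ)) *
          ∑ P : Finpartition (univ : Finset (Fin k)) with #P.parts = s,
            ∏ B ∈ P.parts, ((#B)! * h #B) := by
        rw [key, ← mul_assoc (algebraMap ℚ A (1 / (s ! : ℚ))),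
          algebraMap_one_div_factorial_mul_factorial, one_mul]

theorem factorial_mul_neg_one_pow_pred_div_self {u : ℕ} (hu : u ≠ 0) :
    (u ! : ℚ) * ((-1) ^ (u - 1) / u) = (-1) ^ (u - 1) * (u - 1)! := by
  rw [← Nat.mul_factorial_pred hu, Nat.cast_mul]
  field_simp

theorem sum_finpartition_aCoef_eq_expWeightPart {A : Type*} [CommSemiring A] [Algebra ℚ A]
    (f : ℕ → A) (k : ℕ) :
    ∑ P : Finpartition (univ : Finset (Fin k)),
        algebraMap ℚ A (aCoef P / (k ! : ℚ)) * ∏ B ∈ P.parts, f #B =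
      expWeightPart (fun u =>
        if u = 0 then 0 else algebraMap ℚ A ((-1 : ℚ) ^ (u - 1) / (u : ℚ)) * f u) k := by
  set H : ℕ → A := fun u =>
    if u = 0 then 0 else algebraMap ℚ A ((-1 : ℚ) ^ (u - 1) / (u : ℚ)) * f u
  rw [expWeightPart_eq_sum_finpartition (h := H) (if_pos rfl), mul_sum]
  refine sum_congr rfl fun P _ => ?_
  have hblock : ∀ B ∈ P.parts, ((#B)! : A) * H #B =
      algebraMap ℚ A ((-1 : ℚ) ^ (#B - 1) * ((#B - 1)! : ℚ)) * f #B := fun B hB => by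
    have hB0 : #B ≠ 0 := (card_pos.2 (P.nonempty_of_mem_parts hB)).ne'
    rw [show H #B = _ from if_neg hB0, ← mul_assoc, ← map_natCast (algebraMap ℚ A), ← map_mul,
      factorial_mul_neg_one_pow_pred_div_self hB0]
  rw [prod_congr rfl hblock, prod_mul_distrib, ← map_prod, ← mul_assoc, ← map_mul, aCoef,
    div_eq_inv_mul, one_div]

end ExpWeightPart

section FormalPowerSeries

variable {R : Type*} [CommRing R]

theorem coeff_eq_of_X_pow_dvd_sub {a b : PowerSeries R} {d : ℕ} (h : X ^ (d + 1) ∣ a - b) :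
    coeff d a = coeff d b :=
  sub_eq_zero.1 (by simpa using X_pow_dvd_iff.1 h d d.lt_succ_self)

theorem X_pow_dvd_seriesSum_sub {F : ℕ → PowerSeries R} (hF : ∀ k, X ^ k ∣ F k) (d : ℕ) :
    X ^ (d + 1) ∣ seriesSum F - ∑ k ∈ range (d + 1), F k := by
  refine X_pow_dvd_iff.2 fun m hm => ?_
  rw [map_sub, seriesSum, coeff_mk, map_sum, sub_eq_zero]
  refine sum_subset (range_subset_range.2 (by omega)) fun k hk hkm => ?_
  exact X_pow_dvd_iff.1 (hF k) m (by simp at hk hkm; omega)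

theorem X_pow_dvd_sum_pow_sub {H : ℕ → PowerSeries R} (hH : ∀ u, X ^ u ∣ H u) (d s : ℕ) :
    X ^ (d + 1) ∣ (∑ u ∈ range (d + 1), H u) ^ s -
      ∑ k ∈ range (d + 1), ∑ v ∈ piAntidiag (univ : Finset (Fin s)) k, ∏ i, H (v i) := by
  have hmaps : ∀ v ∈ {v ∈ Fintype.piFinset fun _ : Fin s => range (d + 1) | ∑ i, v i ≤ d},
      ∑ i, v i ∈ range (d + 1) := fun v hv => by
    simpa [Nat.lt_succ_iff] using (mem_filter.1 hv).2
  have hfiber : ∀ k ∈ range (d + 1),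
      {v ∈ {v ∈ Fintype.piFinset fun _ : Fin s => range (d + 1) | ∑ i, v i ≤ d} |
        ∑ i, v i = k} = piAntidiag univ k := fun k hk => by
    ext v
    simp only [mem_filter, Fintype.mem_piFinset, mem_range, mem_piAntidiag, mem_univ,
      implies_true, and_true]
    refine ⟨fun h => h.2, fun h => ?_⟩
    have hkd : k ≤ d := Nat.lt_succ_iff.1 (mem_range.1 hk)
    refine ⟨⟨fun i => ?_, h ▸ hkd⟩, h⟩
    exact Nat.lt_succ_of_le ((single_le_sum (fun j _ => Nat.zero_le (v j)) (mem_univ i)).trans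
      (h ▸ hkd))
  rw [← Fin.prod_const s, prod_univ_sum, ← sum_filter_add_sum_filter_not _ (fun v => ∑ i, v i ≤ d),
    ← sum_fiberwise_of_maps_to hmaps, sum_congr rfl fun k hk => by rw [hfiber k hk],
    add_sub_cancel_left]
  refine dvd_sum fun v hv => ?_
  have hd : d + 1 ≤ ∑ i, v i := by simpa using (mem_filter.1 hv).2
  calc X ^ (d + 1) ∣ X ^ ∑ i, v i := pow_dvd_pow X hd
    _ = ∏ i, X ^ v i := (prod_pow_eq_pow_sum univ v X).symm
    _ ∣ ∏ i, H (v i) := prod_dvd_prod_of_dvd _ _ fun i _ => hH (v i)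

theorem one_add_seriesSum_ite {E : ℕ → PowerSeries R} (hE : E 0 = 1) :
    1 + seriesSum (fun k => if k = 0 then 0 else E k) = seriesSum E := by
  ext d
  simp [seriesSum, sum_range_succ' _ d, hE, add_comm]

theorem formalExp_seriesSum [Algebra ℚ R] {H : ℕ → PowerSeries R} (hH0 : H 0 = 0)
    (hH : ∀ u, X ^ u ∣ H u) : formalExp (seriesSum H) = seriesSum (expWeightPart H) := by
  ext d
  have htrunc : X ^ (d + 1) ∣
      ∑ s ∈ range (d + 1), algebraMap ℚ (PowerSeries R) (1 / (s ! : ℚ)) * seriesSum H ^ s -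
      ∑ s ∈ range (d + 1), algebraMap ℚ (PowerSeries R) (1 / (s ! : ℚ)) *
        ∑ k ∈ range (d + 1), ∑ v ∈ piAntidiag (univ : Finset (Fin s)) k, ∏ i, H (v i) := by
    rw [← sum_sub_distrib]
    refine dvd_sum fun s _ => ?_
    rw [← mul_sub]
    refine Dvd.dvd.mul_left ?_ _
    rw [← sub_add_sub_cancel _ ((∑ u ∈ range (d + 1), H u) ^ s)]
    exact dvd_add ((X_pow_dvd_seriesSum_sub hH d).trans (sub_dvd_pow_sub_pow _ _ s))
      (X_pow_dvd_sum_pow_sub hH d s)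
  have hregroup : ∑ s ∈ range (d + 1), algebraMap ℚ (PowerSeries R) (1 / (s ! : ℚ)) *
        ∑ k ∈ range (d + 1), ∑ v ∈ piAntidiag (univ : Finset (Fin s)) k, ∏ i, H (v i) =
      ∑ k ∈ range (d + 1), expWeightPart H k := by
    rw [sum_congr rfl fun s _ => mul_sum _ _ _, sum_comm]
    refine sum_congr rfl fun k hk => ?_
    rw [expWeightPart_eq_sum_range hH0 (Nat.lt_succ_iff.1 (mem_range.1 hk))]
  rw [formalExp, coeff_mk, ← map_sum, coeff_eq_of_X_pow_dvd_sub htrunc, hregroup, map_sum,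
    seriesSum, coeff_mk]

end FormalPowerSeries

theorem generating_series_partitions (R : Type*) [CommRing R] [Algebra ℚ R]
    (f : ℕ → PowerSeries R) (hf : ∀ n, 1 ≤ n → (PowerSeries.X : PowerSeries R) ^ n ∣ f n) :
    1 + seriesSum (fun k =>
        if k = 0 then 0 else
          ∑ P : Finpartition (Finset.univ : Finset (Fin k)),
            algebraMap ℚ (PowerSeries R) (aCoef P / (Nat.factorial k : ℚ)) *
              ∏ B ∈ P.parts, f B.card)
      = formalExp (seriesSum (fun u =>
          if u = 0 then 0 else
            algebraMap ℚ (PowerSeries R) ((-1 : ℚ) ^ (u - 1) / (u : ℚ)) * f u)) := by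
  set H : ℕ → PowerSeries R := fun u =>
    if u = 0 then 0 else algebraMap ℚ (PowerSeries R) ((-1 : ℚ) ^ (u - 1) / (u : ℚ)) * f u
  have hH : ∀ u, X ^ u ∣ H u := fun u => by
    rcases Nat.eq_zero_or_pos u with rfl | hu
    · simp [H]
    · simpa [H, hu.ne'] using (hf u hu).mul_left _
  simp_rw [sum_finpartition_aCoef_eq_expWeightPart]
  rw [one_add_seriesSum_ite (expWeightPart_zero H), formalExp_seriesSum (if_pos rfl) hH]
end
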